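/- arXiv:math/0404045 — 3 statements merged into one kernel-verified Lean document; each statement's English description precedes it below -/
import Mathlib

section
/- Let A be a random variable with 0 < A < ∞ almost surely. Then min_{0 ≤ x ≤ 1} E[A^x] = max_{0 < y ≤ 1} inf_{x ≥ 0} y^{1−x} E[A^x]; in particular the infimum of x ↦ E[A^x] over [0,1] is attained, the supremum over y ∈ (0,1] of inf_{x ≥ 0} y^{1−x} E[A^x] is attained, and the two values are equal. -/
open MeasureTheory
open scoped ENNReal

open Real Set Filter Topology

/-! The moment function `F x = E[A^x]` is log-convex by Hölder's inequality and lower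
semicontinuous by Fatou's lemma, so it attains its minimum over `[0,1]` at some `x₀`, and
`F x₀ ≤ F 0 = 1`. Weak duality `inf_x y^(1-x) F x ≤ y^(1-x₀) F x₀ ≤ F x₀` holds for every
`y ∈ (0,1]`. Conversely, `log F` has a subgradient `s ≤ 0` at `x₀` on `[0,∞)` with
`s (1 - x₀) = 0`: `s = 0` if `x₀ < 1`, since a local minimum of a convex function is global, and
the supremum of the slopes from the left if `x₀ = 1`. Then `y₀ = exp s` gives
`F x₀ ≤ y₀^(1-x) F x` for all `x ≥ 0`, with equality at `x = x₀`. -/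

theorem lowerSemicontinuous_lintegral {X α : Type*} [TopologicalSpace X] [FirstCountableTopology X]
    [MeasurableSpace α] {μ : Measure α} {f : X → α → ℝ≥0∞} (hf : ∀ x, AEMeasurable (f x) μ)
    (hlsc : ∀ᵐ a ∂μ, LowerSemicontinuous fun x => f x a) :
    LowerSemicontinuous fun x => ∫⁻ a, f x a ∂μ :=
  lowerSemicontinuous_iff_le_liminf.2 fun x =>
    (lintegral_mono_ae (hlsc.mono fun _ ha => ha.le_liminf x)).trans (lintegral_liminf_le' hf)

section Moments

variable {Ω : Type*} [MeasurableSpace Ω] {μ : Measure Ω} {A : Ω → ℝ}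

theorem lintegral_ofReal_rpow_ne_zero [NeZero μ] (hA : AEMeasurable A μ)
    (hApos : ∀ᵐ ω ∂μ, 0 < A ω) (x : ℝ) : ∫⁻ ω, ENNReal.ofReal (A ω ^ x) ∂μ ≠ 0 := by
  rw [Ne, lintegral_eq_zero_iff' (hA.pow_const x).ennreal_ofReal]
  intro h
  obtain ⟨ω, hpos, hzero⟩ := (hApos.and h).exists
  simp only [Pi.zero_apply, ENNReal.ofReal_eq_zero] at hzero
  exact (Real.rpow_pos_of_pos hpos x).not_ge hzero

theorem lintegral_ofReal_rpow_le_rpow_mul_rpow (hA : AEMeasurable A μ)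
    (hApos : ∀ᵐ ω ∂μ, 0 < A ω) (a b : ℝ) {p q : ℝ} (hp : 0 ≤ p) (hq : 0 ≤ q) (hpq : p + q = 1) :
    ∫⁻ ω, ENNReal.ofReal (A ω ^ (p * a + q * b)) ∂μ ≤
      (∫⁻ ω, ENNReal.ofReal (A ω ^ a) ∂μ) ^ p * (∫⁻ ω, ENNReal.ofReal (A ω ^ b) ∂μ) ^ q := by
  calc ∫⁻ ω, ENNReal.ofReal (A ω ^ (p * a + q * b)) ∂μ
      = ∫⁻ ω, ENNReal.ofReal (A ω ^ a) ^ p * ENNReal.ofReal (A ω ^ b) ^ q ∂μ := by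
        refine lintegral_congr_ae (hApos.mono fun ω hω => ?_)
        dsimp only
        rw [ENNReal.ofReal_rpow_of_nonneg (by positivity) hp,
          ENNReal.ofReal_rpow_of_nonneg (by positivity) hq, ← ENNReal.ofReal_mul (by positivity),
          ← Real.rpow_mul hω.le, ← Real.rpow_mul hω.le, ← Real.rpow_add hω, mul_comm a, mul_comm b]
    _ ≤ _ := ENNReal.lintegral_mul_norm_pow_le (hA.pow_const a).ennreal_ofReal
        (hA.pow_const b).ennreal_ofReal hp hq hpq

end Moments

theorem convexOn_log_toReal_of_le_rpow_mul_rpow {F : ℝ → ℝ≥0∞} (hF0 : ∀ x, F x ≠ 0)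
    (hF : ∀ a b p q : ℝ, 0 ≤ p → 0 ≤ q → p + q = 1 → F (p * a + q * b) ≤ F a ^ p * F b ^ q) :
    ConvexOn ℝ {x | F x ≠ ∞} fun x => log (F x).toReal := by
  have hprod {a b p q : ℝ} (ha : F a ≠ ∞) (hb : F b ≠ ∞) (hp : 0 ≤ p) (hq : 0 ≤ q) :
      F a ^ p * F b ^ q ≠ ∞ :=
    ENNReal.mul_ne_top (ENNReal.rpow_ne_top_of_nonneg hp ha) (ENNReal.rpow_ne_top_of_nonneg hq hb)
  refine ⟨fun a ha b hb p q hp hq hpq => ?_, fun a ha b hb p q hp hq hpq => ?_⟩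
  · exact ne_top_of_le_ne_top (hprod ha hb hp hq) (hF a b p q hp hq hpq)
  · have hFa := ENNReal.toReal_pos (hF0 a) ha
    have hFb := ENNReal.toReal_pos (hF0 b) hb
    have hle := hF a b p q hp hq hpq
    calc log (F (p • a + q • b)).toReal ≤ log (F a ^ p * F b ^ q).toReal :=
          log_le_log (ENNReal.toReal_pos (hF0 _) (ne_top_of_le_ne_top (hprod ha hb hp hq) hle))
            (ENNReal.toReal_mono (hprod ha hb hp hq) hle)
      _ = p • log (F a).toReal + q • log (F b).toReal := by
        rw [ENNReal.toReal_mul, ← ENNReal.toReal_rpow, ← ENNReal.toReal_rpow,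
          log_mul (Real.rpow_pos_of_pos hFa p).ne' (Real.rpow_pos_of_pos hFb q).ne',
          Real.log_rpow hFa, Real.log_rpow hFb, smul_eq_mul, smul_eq_mul]

section Subgradient

variable {D : Set ℝ} {g : ℝ → ℝ} {a b : ℝ}

theorem ConvexOn.isMinOn_inter_Ici_of_isMinOn_Icc (hg : ConvexOn ℝ D g) {x₀ : ℝ}
    (hx₀ : x₀ ∈ D ∩ Icc a b) (hx₀b : x₀ < b) (hmin : IsMinOn g (D ∩ Icc a b) x₀) :
    IsMinOn g (D ∩ Ici a) x₀ := by
  refine IsMinOn.of_isLocalMinOn_of_convexOn ⟨hx₀.1, hx₀.2.1⟩ ?_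
    (hg.subset inter_subset_left (hg.1.inter (convex_Ici a)))
  filter_upwards [inter_mem_nhdsWithin (D ∩ Ici a) (Iio_mem_nhds hx₀b)] with x hx
  exact hmin ⟨hx.1.1, hx.1.2, hx.2.le⟩

/-- The subgradient is the supremum of the slopes from the left at `b`. -/
theorem ConvexOn.exists_nonpos_subgradient_of_isMinOn_Icc_right (hg : ConvexOn ℝ D g)
    (hab : a < b) (ha : a ∈ D) (hb : b ∈ D) (hmin : IsMinOn g (D ∩ Icc a b) b) :
    ∃ s ≤ 0, ∀ x ∈ D, a ≤ x → g b + s * (x - b) ≤ g x := by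
  have hsub : Icc a b ⊆ D := hg.1.ordConnected.out ha hb
  set S := (fun u => (g b - g u) / (b - u)) '' Ico a b
  have hS0 : ∀ v ∈ S, v ≤ 0 := by
    rintro _ ⟨u, hu, rfl⟩
    exact div_nonpos_of_nonpos_of_nonneg
      (sub_nonpos.2 (hmin ⟨hsub (Ico_subset_Icc_self hu), Ico_subset_Icc_self hu⟩))
      (sub_nonneg.2 hu.2.le)
  have hSne : S.Nonempty := ⟨_, a, ⟨le_rfl, hab⟩, rfl⟩
  refine ⟨sSup S, csSup_le hSne hS0, fun x hx hax => ?_⟩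
  rcases lt_trichotomy x b with hxb | rfl | hbx
  · have hslope : (g b - g x) / (b - x) ≤ sSup S := le_csSup ⟨0, hS0⟩ ⟨x, ⟨hax, hxb⟩, rfl⟩
    rw [div_le_iff₀ (sub_pos.2 hxb)] at hslope
    linarith [show sSup S * (x - b) = -(sSup S * (b - x)) by ring]
  · simp
  · have hslope : sSup S ≤ (g x - g b) / (x - b) := csSup_le hSne <| by
      rintro _ ⟨u, hu, rfl⟩
      exact hg.slope_mono_adjacent (hsub (Ico_subset_Icc_self hu)) hx hu.2 hbx
    rw [le_div_iff₀ (sub_pos.2 hbx)] at hslope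
    linarith

theorem ConvexOn.exists_nonpos_subgradient_of_isMinOn_Icc (hg : ConvexOn ℝ D g) (hab : a < b)
    (ha : a ∈ D) {x₀ : ℝ} (hx₀ : x₀ ∈ D ∩ Icc a b) (hmin : IsMinOn g (D ∩ Icc a b) x₀) :
    ∃ s ≤ 0, s * (b - x₀) = 0 ∧ ∀ x ∈ D, a ≤ x → g x₀ + s * (x - x₀) ≤ g x := by
  rcases hx₀.2.2.lt_or_eq with hx₀b | rfl
  · refine ⟨0, le_rfl, zero_mul _, fun x hx hax => ?_⟩
    simpa using hg.isMinOn_inter_Ici_of_isMinOn_Icc hx₀ hx₀b hmin ⟨hx, hax⟩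
  · obtain ⟨s, hs, hsupp⟩ := hg.exists_nonpos_subgradient_of_isMinOn_Icc_right hab ha hx₀.1 hmin
    exact ⟨s, hs, by simp, hsupp⟩

end Subgradient

theorem le_ofReal_exp_mul_of_log_toReal_le {p q : ℝ≥0∞} (hp : p ≠ ∞) (hq0 : q ≠ 0) (hq : q ≠ ∞)
    {c : ℝ} (h : log p.toReal ≤ c + log q.toReal) : p ≤ ENNReal.ofReal (exp c) * q :=
  calc p = ENNReal.ofReal p.toReal := (ENNReal.ofReal_toReal hp).symm
    _ ≤ ENNReal.ofReal (exp (c + log q.toReal)) :=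
      ENNReal.ofReal_le_ofReal ((le_exp_log _).trans (exp_le_exp.2 h))
    _ = ENNReal.ofReal (exp c) * q := by
      rw [exp_add, exp_log (ENNReal.toReal_pos hq0 hq), ENNReal.ofReal_mul (exp_pos c).le,
        ENNReal.ofReal_toReal hq]

theorem exists_min_eq_max_inf_of_logConvex {F : ℝ → ℝ≥0∞} (hF0 : ∀ x, F x ≠ 0) (hFtop : F 0 ≠ ∞)
    (hF : ∀ a b p q : ℝ, 0 ≤ p → 0 ≤ q → p + q = 1 → F (p * a + q * b) ≤ F a ^ p * F b ^ q)
    (hmin : ∃ x₀ ∈ Icc (0 : ℝ) 1, IsMinOn F (Icc 0 1) x₀) :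
    ∃ x₀ ∈ Icc (0 : ℝ) 1, ∃ y₀ ∈ Ioc (0 : ℝ) 1, (∀ x ∈ Icc (0 : ℝ) 1, F x₀ ≤ F x) ∧
      (∀ y ∈ Ioc (0 : ℝ) 1, (⨅ x ∈ Ici (0 : ℝ), ENNReal.ofReal (y ^ (1 - x)) * F x) ≤
        ⨅ x ∈ Ici (0 : ℝ), ENNReal.ofReal (y₀ ^ (1 - x)) * F x) ∧
      F x₀ = ⨅ x ∈ Ici (0 : ℝ), ENNReal.ofReal (y₀ ^ (1 - x)) * F x := by
  obtain ⟨x₀, hx₀, hmin⟩ := hmin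
  have hx₀top : F x₀ ≠ ∞ := ne_top_of_le_ne_top hFtop (hmin ⟨le_rfl, zero_le_one⟩)
  have hGmin : IsMinOn (fun x => log (F x).toReal) ({x | F x ≠ ∞} ∩ Icc 0 1) x₀ := fun x hx =>
    log_le_log (ENNReal.toReal_pos (hF0 x₀) hx₀top) (ENNReal.toReal_mono hx.1 (hmin hx.2))
  obtain ⟨s, hs0, hs1, hsupp⟩ :=
    (convexOn_log_toReal_of_le_rpow_mul_rpow hF0 hF).exists_nonpos_subgradient_of_isMinOn_Icc
      zero_lt_one hFtop ⟨hx₀top, hx₀⟩ hGmin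
  have hle : ∀ x ∈ Ici (0 : ℝ), F x₀ ≤ ENNReal.ofReal (exp s ^ (1 - x)) * F x := by
    intro x hx
    rw [← exp_mul]
    rcases eq_or_ne (F x) ∞ with h | h
    · simp [h, exp_pos]
    · refine le_ofReal_exp_mul_of_log_toReal_le hx₀top (hF0 x) h ?_
      linarith [hsupp x h hx, show s * (1 - x) = s * (1 - x₀) - s * (x - x₀) by ring]
  have heq : F x₀ = ⨅ x ∈ Ici (0 : ℝ), ENNReal.ofReal (exp s ^ (1 - x)) * F x :=
    le_antisymm (le_iInf₂ hle) <| (iInf₂_le x₀ hx₀.1).trans <| by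
      rw [← exp_mul, hs1, exp_zero, ENNReal.ofReal_one, one_mul]
  refine ⟨x₀, hx₀, exp s, ⟨exp_pos s, exp_le_one_iff.2 hs0⟩, fun x hx => hmin hx,
    fun y hy => heq ▸ (iInf₂_le x₀ hx₀.1).trans ?_, heq⟩
  exact mul_le_of_le_one_left' (ENNReal.ofReal_le_one.2
    (rpow_le_one hy.1.le hy.2 (sub_nonneg.2 hx₀.2)))

/-- **Lemma (Lyons–Pemantle).** For a random variable `A` with `0 < A < ∞` a.s.
(expectations `E[A^x]` taken in `[0,∞]`),
`min_{0 ≤ x ≤ 1} E[A^x] = max_{0 < y ≤ 1} inf_{x ≥ 0} y^{1-x} E[A^x]`: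
the minimum over `[0,1]` is attained at some `x₀`, the maximum over `(0,1]` is attained
at some `y₀`, and the two values are equal. -/
theorem min_expectation_rpow_eq_max_inf
    {Ω : Type*} [MeasurableSpace Ω] (μ : Measure Ω) [IsProbabilityMeasure μ]
    (A : Ω → ℝ) (hA : Measurable A) (hApos : ∀ᵐ ω ∂μ, 0 < A ω) :
    ∃ x₀ ∈ Set.Icc (0 : ℝ) 1, ∃ y₀ ∈ Set.Ioc (0 : ℝ) 1,
      (∀ x ∈ Set.Icc (0 : ℝ) 1,
        (∫⁻ ω, ENNReal.ofReal (A ω ^ x₀) ∂μ) ≤ ∫⁻ ω, ENNReal.ofReal (A ω ^ x) ∂μ) ∧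
      (∀ y ∈ Set.Ioc (0 : ℝ) 1,
        (⨅ x ∈ Set.Ici (0 : ℝ),
            ENNReal.ofReal (y ^ (1 - x)) * ∫⁻ ω, ENNReal.ofReal (A ω ^ x) ∂μ) ≤
          ⨅ x ∈ Set.Ici (0 : ℝ),
            ENNReal.ofReal (y₀ ^ (1 - x)) * ∫⁻ ω, ENNReal.ofReal (A ω ^ x) ∂μ) ∧
      (∫⁻ ω, ENNReal.ofReal (A ω ^ x₀) ∂μ) =
        ⨅ x ∈ Set.Ici (0 : ℝ),
          ENNReal.ofReal (y₀ ^ (1 - x)) * ∫⁻ ω, ENNReal.ofReal (A ω ^ x) ∂μ := by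
  have hlsc : LowerSemicontinuous fun x : ℝ => ∫⁻ ω, ENNReal.ofReal (A ω ^ x) ∂μ :=
    lowerSemicontinuous_lintegral (fun x => (hA.pow_const x).ennreal_ofReal.aemeasurable)
      (hApos.mono fun ω h => Continuous.lowerSemicontinuous <|
        ENNReal.continuous_ofReal.comp (Real.continuous_const_rpow h.ne'))
  exact exists_min_eq_max_inf_of_logConvex
    (lintegral_ofReal_rpow_ne_zero hA.aemeasurable hApos) (by simp)
    (fun a b p q hp hq hpq =>
      lintegral_ofReal_rpow_le_rpow_mul_rpow hA.aemeasurable hApos a b hp hq hpq)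
    (hlsc.lowerSemicontinuousOn _ |>.exists_isMinOn (nonempty_Icc.2 zero_le_one) isCompact_Icc)
end

section
/- For every a ∈ ℝ and every n ≥ 1, (1/n) · log P[S_n ≥ n·a] ≤ γ(a); that is, P[S_n ≥ n·a] ≤ e^{n·γ(a)} (interpreted in the extended reals when γ(a) = −∞). -/
/-!
Markov's inequality applied to `e^{θ S_n}` with `θ ≥ 0` gives
`P[S_n ≥ n a] ≤ e^{-θ n a} E[e^{θ S_n}]`, and by independence `E[e^{θ S_n}] = φ(θ)^n`.
Taking logarithms, `log P[S_n ≥ n a] ≤ n (-a θ + log φ(θ))` for every `θ ≥ 0`. All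
expectations are lower Lebesgue integrals, so nothing needs to be integrable.
-/

open MeasureTheory ProbabilityTheory
open scoped ENNReal

section

variable {Ω : Type*} [MeasurableSpace Ω] {μ : Measure Ω}

theorem lintegral_prod_comp_eq_pow_of_identDistrib {ι β : Type*} [MeasurableSpace β]
    {Xs : ι → Ω → β} {X : Ω → β} (hXs : ∀ i, Measurable (Xs i))
    (hid : ∀ i, IdentDistrib (Xs i) X μ μ) (hind : iIndepFun Xs μ)
    {g : β → ℝ≥0∞} (hg : Measurable g) (s : Finset ι) :
    ∫⁻ ω, ∏ i ∈ s, g (Xs i ω) ∂μ = (∫⁻ ω, g (X ω) ∂μ) ^ s.card := by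
  refine (lintegral_prod_eq_prod_lintegral_of_indepFun s (fun i => g ∘ Xs i)
    (hind.comp (fun _ => g) fun _ => hg) fun i => hg.comp (hXs i)).trans ?_
  exact Finset.prod_eq_pow_card fun i _ => ((hid i).comp hg).lintegral_eq

theorem lintegral_exp_mul_sum_range_eq_pow {Xs : ℕ → Ω → ℝ} {X : Ω → ℝ}
    (hXs : ∀ i, Measurable (Xs i)) (hid : ∀ i, IdentDistrib (Xs i) X μ μ)
    (hind : iIndepFun Xs μ) (θ : ℝ) (n : ℕ) :
    ∫⁻ ω, ENNReal.ofReal (Real.exp (θ * ∑ i ∈ Finset.range n, Xs i ω)) ∂μ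
      = (∫⁻ ω, ENNReal.ofReal (Real.exp (θ * X ω)) ∂μ) ^ n := by
  have hg : Measurable fun x : ℝ => ENNReal.ofReal (Real.exp (θ * x)) := by fun_prop
  have hexp_sum (ω : Ω) : ENNReal.ofReal (Real.exp (θ * ∑ i ∈ Finset.range n, Xs i ω))
      = ∏ i ∈ Finset.range n, ENNReal.ofReal (Real.exp (θ * Xs i ω)) := by
    rw [Finset.mul_sum, Real.exp_sum,
      ENNReal.ofReal_prod_of_nonneg fun i _ => (Real.exp_pos _).le]
  simp_rw [hexp_sum]
  rw [lintegral_prod_comp_eq_pow_of_identDistrib hXs hid hind hg, Finset.card_range]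

theorem measure_ge_le_exp_mul_lintegral_exp {Y : Ω → ℝ} (hY : AEMeasurable Y μ) (t : ℝ)
    {θ : ℝ} (hθ : 0 ≤ θ) :
    μ {ω | t ≤ Y ω}
      ≤ ENNReal.ofReal (Real.exp (-(θ * t))) * ∫⁻ ω, ENNReal.ofReal (Real.exp (θ * Y ω)) ∂μ := by
  have hε : 0 < Real.exp (θ * t) := Real.exp_pos _
  calc μ {ω | t ≤ Y ω}
      ≤ μ {ω | ENNReal.ofReal (Real.exp (θ * t)) ≤ ENNReal.ofReal (Real.exp (θ * Y ω))} :=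
        measure_mono fun ω (hω : t ≤ Y ω) =>
          ENNReal.ofReal_le_ofReal (Real.exp_le_exp.2 (mul_le_mul_of_nonneg_left hω hθ))
    _ ≤ (∫⁻ ω, ENNReal.ofReal (Real.exp (θ * Y ω)) ∂μ) / ENNReal.ofReal (Real.exp (θ * t)) :=
        meas_ge_le_lintegral_div (by fun_prop) (ENNReal.ofReal_pos.2 hε).ne' ENNReal.ofReal_ne_top
    _ = _ := by
        rw [div_eq_mul_inv, ← ENNReal.ofReal_inv_of_pos hε, ← Real.exp_neg, mul_comm]

end

theorem chernoff_cramer_upper_bound_general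
    {Ω : Type*} [MeasurableSpace Ω] (μ : Measure Ω)
    (X : Ω → ℝ)
    (Xs : ℕ → Ω → ℝ) (hXs : ∀ i, Measurable (Xs i))
    (hid : ∀ i, IdentDistrib (Xs i) X μ μ)
    (hind : iIndepFun Xs μ)
    (a : ℝ) (n : ℕ) (hn : 1 ≤ n) :
    ENNReal.log (μ {ω | (n : ℝ) * a ≤ ∑ i ∈ Finset.range n, Xs i ω}) ≤
      ((n : ℝ) : EReal) *
        ⨅ θ ∈ Set.Ici (0 : ℝ),
          (((-(a * θ) : ℝ) : EReal) +
            ENNReal.log (∫⁻ ω, ENNReal.ofReal (Real.exp (θ * X ω)) ∂μ)) := by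
  have hn_pos : (0 : EReal) < ((n : ℝ) : EReal) := by exact_mod_cast hn
  rw [← EReal.div_le_iff_le_mul hn_pos (EReal.coe_ne_top _)]
  refine le_iInf₂ fun θ (hθ : 0 ≤ θ) => ?_
  rw [EReal.div_le_iff_le_mul hn_pos (EReal.coe_ne_top _)]
  set φ := ∫⁻ ω, ENNReal.ofReal (Real.exp (θ * X ω)) ∂μ
  have hchernoff : μ {ω | (n : ℝ) * a ≤ ∑ i ∈ Finset.range n, Xs i ω}
      ≤ (ENNReal.ofReal (Real.exp (-(a * θ))) * φ) ^ n := by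
    refine (measure_ge_le_exp_mul_lintegral_exp (by fun_prop) _ hθ).trans_eq ?_
    rw [lintegral_exp_mul_sum_range_eq_pow hXs hid hind, mul_pow,
      ← ENNReal.ofReal_pow (Real.exp_nonneg _), ← Real.exp_nat_mul]
    congr 3
    ring
  calc ENNReal.log (μ {ω | (n : ℝ) * a ≤ ∑ i ∈ Finset.range n, Xs i ω})
      ≤ ENNReal.log ((ENNReal.ofReal (Real.exp (-(a * θ))) * φ) ^ n) :=
        ENNReal.log_monotone hchernoff
    _ = ((n : ℝ) : EReal) * (((-(a * θ) : ℝ) : EReal) + ENNReal.log φ) := by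
        rw [ENNReal.log_pow, ENNReal.log_mul_add, ENNReal.log_ofReal_of_pos (Real.exp_pos _),
          Real.log_exp, EReal.coe_coe_eq_natCast]

/-- **Chernoff–Cramér upper bound.** Let `X` be a real-valued random variable (no
integrability assumed), `φ(θ) := E[e^{θX}] ∈ [0,∞]`,
`γ(a) := inf_{θ ≥ 0} (-aθ + log φ(θ)) ∈ [-∞,∞]`, and let `S n` be the sum of `n`
independent copies of `X`.  Then for every `a ∈ ℝ` and `n ≥ 1`,
`(1/n) log P[S_n ≥ n a] ≤ γ(a)`, i.e. `log P[S_n ≥ n a] ≤ n γ(a)` in the extended reals. -/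
theorem chernoff_cramer_upper_bound
    {Ω : Type*} [MeasurableSpace Ω] (μ : Measure Ω) [IsProbabilityMeasure μ]
    (X : Ω → ℝ) (hX : Measurable X)
    (Xs : ℕ → Ω → ℝ) (hXs : ∀ i, Measurable (Xs i))
    (hid : ∀ i, IdentDistrib (Xs i) X μ μ)
    (hind : iIndepFun Xs μ)
    (a : ℝ) (n : ℕ) (hn : 1 ≤ n) :
    ENNReal.log (μ {ω | (n : ℝ) * a ≤ ∑ i ∈ Finset.range n, Xs i ω}) ≤
      ((n : ℝ) : EReal) *
        ⨅ θ ∈ Set.Ici (0 : ℝ),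
          (((-(a * θ) : ℝ) : EReal) +
            ENNReal.log (∫⁻ ω, ENNReal.ofReal (Real.exp (θ * X ω)) ∂μ)) :=
  chernoff_cramer_upper_bound_general μ X Xs hXs hid hind a n hn
end

section
/- If inf over cutsets Π of Σ_{σ∈Π} p^{|σ|} = 0 (in particular, if p · br T < 1), then almost surely the infimum over cutsets Π of Σ_{σ∈Π} C_σ equals 0, and consequently almost surely the only flow θ on T satisfying θ(σ) ≤ C_σ for all non-root σ is the zero flow. -/
open MeasureTheory ProbabilityTheory Filter
open scoped ENNReal NNReal

/-- An infinite, locally finite rooted tree, modeled as a set of finite sequences of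
natural numbers: it contains the empty sequence (the root), is closed under taking
prefixes, is infinite, and every vertex has only finitely many one-step extensions. -/
structure LFTree : Type where
  carrier : Set (List ℕ)
  root_mem : [] ∈ carrier
  prefix_closed : ∀ ⦃σ : List ℕ⦄, σ ∈ carrier → ∀ ⦃τ : List ℕ⦄, τ <+: σ → τ ∈ carrier
  infinite : carrier.Infinite
  locallyFinite : ∀ σ ∈ carrier, {n : ℕ | σ ++ [n] ∈ carrier}.Finite

namespace LFTree

/-- The length-`n` initial prefix of an infinite sequence. -/
def pref (s : ℕ → ℕ) (n : ℕ) : List ℕ :=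
  List.ofFn fun i : Fin n => s i

/-- A ray of `T`: an infinite sequence of natural numbers all of whose finite
prefixes lie in `T`. -/
def IsRay (T : LFTree) (s : ℕ → ℕ) : Prop :=
  ∀ n : ℕ, pref s n ∈ T.carrier

/-- A cutset: a finite set of non-root vertices of `T` such that every ray has a
prefix in it, and no element is a (proper) prefix of another. -/
def IsCutset (T : LFTree) (c : Finset (List ℕ)) : Prop :=
  (∀ σ ∈ c, σ ∈ T.carrier ∧ σ ≠ []) ∧
  (∀ s : ℕ → ℕ, T.IsRay s → ∃ σ ∈ c, ∃ n : ℕ, σ = pref s n) ∧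
  (∀ σ ∈ c, ∀ τ ∈ c, σ <+: τ → σ = τ)

/-- The branching number of `T`:
`br T = inf {λ > 0 : inf over cutsets Π of Σ_{σ ∈ Π} λ^{-|σ|} = 0}`. -/
noncomputable def br (T : LFTree) : ℝ :=
  sInf {l : ℝ | 0 < l ∧ ∀ ε : ℝ, 0 < ε →
    ∃ c : Finset (List ℕ), T.IsCutset c ∧ ∑ σ ∈ c, l ^ (-(σ.length : ℤ)) < ε}

/-- The set of non-root vertices of `T`, as a type. -/
def Vertex (T : LFTree) : Type :=
  {σ : List ℕ // σ ∈ T.carrier ∧ σ ≠ []}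

/-- A flow on `T`: a nonnegative function on the non-root vertices (modeled as a
function on all finite sequences) satisfying the conservation law
`θ(σ) = Σ_{τ a child of σ in T} θ(τ)` at every non-root vertex `σ` of `T`. -/
def IsFlow (T : LFTree) (θ : List ℕ → ℝ) : Prop :=
  (∀ σ : List ℕ, σ ∈ T.carrier → σ ≠ [] → 0 ≤ θ σ) ∧
  (∀ σ : List ℕ, σ ∈ T.carrier → σ ≠ [] →
    θ σ = ∑' n : {n : ℕ // σ ++ [n] ∈ T.carrier}, θ (σ ++ [n.1]))

/-- A flow is nonzero when the total flow out of the root is positive. -/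
def FlowNonzero (T : LFTree) (θ : List ℕ → ℝ) : Prop :=
  0 < ∑' n : {n : ℕ // [n] ∈ T.carrier}, θ [n.1]

end LFTree

/-- `cumul Aσ σ ω = ∏_{0 < τ ≤ σ} A_τ(ω)`, the product of the values `A_τ`
over the non-root prefixes `τ` of `σ`. -/
noncomputable def cumul {Ω : Type*} (Aσ : List ℕ → Ω → ℝ) (σ : List ℕ) (ω : Ω) : ℝ :=
  ∏ i ∈ Finset.range σ.length, Aσ (σ.take (i + 1)) ω

/-- `p = min_{0 ≤ x ≤ 1} E[A^x]`, the expectations taken in `[0,∞]`. -/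
noncomputable def pval {Ω : Type*} [MeasurableSpace Ω] (μ : Measure Ω) (A : Ω → ℝ) : ℝ≥0∞ :=
  ⨅ x ∈ Set.Icc (0 : ℝ) 1, ∫⁻ ω, ENNReal.ofReal (A ω ^ x) ∂μ

/-!
For `0 ≤ x ≤ 1`, independence gives `E[∑_{σ ∈ Π} C_σ ^ x] = ∑_{σ ∈ Π} E[A ^ x] ^ |σ|`, and
choosing `x` with `E[A ^ x]` close to `p` and then a suitable cutset `Π` makes this as small
as we like. By Markov's inequality `∑_{σ ∈ Π} C_σ ^ x` is then small with high
probability, and as `C ≤ C ^ x` once `C ^ x < 1`, so is `∑_{σ ∈ Π} C_σ`.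

On the deterministic side, a flow at a vertex `σ` is at most its total over any cutset: a
positive flow can always be followed to a positive child, so a vertex deeper than the cutset
and avoiding it, which would then lie on a ray missing the cutset, carries no flow. A flow
bounded by `C` therefore vanishes when the cutset sums of `C` can be made arbitrarily small.
-/

namespace LFTree

lemma length_pref (s : ℕ → ℕ) (n : ℕ) : (pref s n).length = n := by
  simp [pref]

lemma pref_succ (s : ℕ → ℕ) (n : ℕ) : pref s (n + 1) = pref s n ++ [s n] := by
  rw [pref, List.ofFn_succ']
  simp [pref, List.concat_eq_append]

lemma pref_prefix_pref (s : ℕ → ℕ) {m n : ℕ} (h : m ≤ n) : pref s m <+: pref s n := by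
  induction n, h using Nat.le_induction with
  | base => exact List.prefix_refl _
  | succ n _ ih => exact ih.trans (by rw [pref_succ]; exact List.prefix_append _ _)

lemma prefix_of_le_of_prefix_succ {u : ℕ → List ℕ} (hu : ∀ n, u n <+: u (n + 1)) {m n : ℕ}
    (h : m ≤ n) : u m <+: u n := by
  induction n, h using Nat.le_induction with
  | base => exact List.prefix_refl _
  | succ n _ ih => exact ih.trans (hu n)

lemma pref_prefix_of_prefix_succ {u : ℕ → List ℕ} (hu : ∀ n, u n <+: u (n + 1))
    (hlen : ∀ n, n ≤ (u n).length) (n : ℕ) :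
    pref (fun i => (u (i + 1))[i]'(hlen (i + 1))) n <+: u n := by
  rw [List.prefix_iff_eq_take]
  refine List.ext_getElem (by simp [length_pref, hlen n]) fun i hi _ => ?_
  simp only [length_pref] at hi
  simp only [pref, List.getElem_ofFn, List.getElem_take]
  exact (prefix_of_le_of_prefix_succ hu hi).getElem _

end LFTree

lemma Finset.sum_sum_filter_append_singleton_prefix_le {α : Type*} [DecidableEq α]
    {c : Finset (List α)} {N : Finset α} {σ : List α} {f : List α → ℝ} (hf : ∀ τ ∈ c, 0 ≤ f τ) :
    ∑ n ∈ N, ∑ τ ∈ c with σ ++ [n] <+: τ, f τ ≤ ∑ τ ∈ c with σ <+: τ, f τ := by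
  have hdisj : (N : Set α).PairwiseDisjoint fun n => c.filter (σ ++ [n] <+: ·) := by
    intro n _ m _ hnm
    refine Finset.disjoint_left.2 fun τ hτn hτm => hnm ?_
    simpa using (List.prefix_of_prefix_length_le (Finset.mem_filter.1 hτn).2
      (Finset.mem_filter.1 hτm).2 (by simp)).eq_of_length (by simp)
  rw [← Finset.sum_biUnion hdisj]
  refine Finset.sum_le_sum_of_subset_of_nonneg (fun τ hτ => ?_) fun τ hτ _ =>
    hf τ (Finset.mem_filter.1 hτ).1
  obtain ⟨n, _, hτn⟩ := Finset.mem_biUnion.1 hτ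
  obtain ⟨hτc, hpre⟩ := Finset.mem_filter.1 hτn
  exact Finset.mem_filter.2 ⟨hτc, (List.prefix_append σ [n]).trans hpre⟩

namespace LFTree.IsFlow

variable {T : LFTree} {θ : List ℕ → ℝ}

lemma nonneg (hθ : T.IsFlow θ) {σ : List ℕ} (hσ : σ ∈ T.carrier) (hne : σ ≠ []) : 0 ≤ θ σ :=
  hθ.1 σ hσ hne

lemma eq_sum_children (hθ : T.IsFlow θ) {σ : List ℕ} (hσ : σ ∈ T.carrier) (hne : σ ≠ []) :
    θ σ = ∑ n ∈ (T.locallyFinite σ hσ).toFinset, θ (σ ++ [n]) := by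
  have : Fintype {n : ℕ // σ ++ [n] ∈ T.carrier} := (T.locallyFinite σ hσ).fintype
  rw [hθ.2 σ hσ hne, tsum_fintype]
  exact (Finset.sum_subtype _ (fun _ => (T.locallyFinite σ hσ).mem_toFinset)
    fun n => θ (σ ++ [n])).symm

lemma apply_append_singleton_le (hθ : T.IsFlow θ) {σ : List ℕ} {n : ℕ}
    (hσn : σ ++ [n] ∈ T.carrier) (hne : σ ≠ []) : θ (σ ++ [n]) ≤ θ σ := by
  have hσ : σ ∈ T.carrier := T.prefix_closed hσn (List.prefix_append _ _)
  rw [hθ.eq_sum_children hσ hne]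
  refine Finset.single_le_sum (f := fun m => θ (σ ++ [m])) (fun m hm => ?_)
    ((T.locallyFinite σ hσ).mem_toFinset.2 hσn)
  exact hθ.nonneg ((T.locallyFinite σ hσ).mem_toFinset.1 hm) (by simp)

lemma apply_le_of_prefix (hθ : T.IsFlow θ) {τ σ : List ℕ} (hτσ : τ <+: σ)
    (hσ : σ ∈ T.carrier) (hne : τ ≠ []) : θ σ ≤ θ τ := by
  obtain ⟨l, rfl⟩ := hτσ
  induction l using List.reverseRecOn with
  | nil => simp
  | append_singleton l n ih =>
    rw [← List.append_assoc] at hσ ⊢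
    exact (hθ.apply_append_singleton_le hσ (by simp [hne])).trans
      (ih (T.prefix_closed hσ (List.prefix_append _ _)))

lemma exists_child_pos (hθ : T.IsFlow θ) {σ : List ℕ} (hσ : σ ∈ T.carrier) (hne : σ ≠ [])
    (hpos : 0 < θ σ) : ∃ n, σ ++ [n] ∈ T.carrier ∧ 0 < θ (σ ++ [n]) := by
  rw [hθ.eq_sum_children hσ hne, ← Finset.sum_const_zero] at hpos
  obtain ⟨n, hn, hpos⟩ := Finset.exists_lt_of_sum_lt hpos
  exact ⟨n, (T.locallyFinite σ hσ).mem_toFinset.1 hn, hpos⟩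

/-- Following children with positive flow forever produces a ray through `σ`. -/
lemma exists_ray_of_pos (hθ : T.IsFlow θ) {σ : List ℕ} (hσ : σ ∈ T.carrier) (hne : σ ≠ [])
    (hpos : 0 < θ σ) : ∃ s, T.IsRay s ∧ pref s σ.length = σ := by
  let Pos := {τ : List ℕ // τ ∈ T.carrier ∧ τ ≠ [] ∧ 0 < θ τ}
  choose next hnext using fun τ : Pos => hθ.exists_child_pos τ.2.1 τ.2.2.1 τ.2.2.2
  let grow : Pos → Pos := fun τ => ⟨τ.1 ++ [next τ], (hnext τ).1, by simp, (hnext τ).2⟩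
  let u : ℕ → Pos := fun n => grow^[n] ⟨σ, hσ, hne, hpos⟩
  have hu : ∀ n, (u n).1 <+: (u (n + 1)).1 := fun n => by
    simp only [u, Function.iterate_succ_apply']
    exact List.prefix_append _ _
  have hlen : ∀ n, (u n).1.length = σ.length + n := fun n => by
    induction n with
    | zero => rfl
    | succ n ih =>
      simp only [u, Function.iterate_succ_apply'] at ih ⊢
      simp [grow, ih, Nat.add_assoc]
  have hlen' : ∀ n, n ≤ (u n).1.length := fun n => hlen n ▸ Nat.le_add_left n _
  have hpref := pref_prefix_of_prefix_succ hu hlen'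
  refine ⟨_, fun n => T.prefix_closed (u n).2.1 (hpref n), ?_⟩
  have hσu : σ <+: (u σ.length).1 := prefix_of_le_of_prefix_succ hu (Nat.zero_le _)
  exact (List.prefix_of_prefix_length_le (hpref _) hσu (by simp [length_pref])).eq_of_length
    (length_pref _ _)

lemma eq_zero_of_forall_length_le_of_not_prefix (hθ : T.IsFlow θ) {c : Finset (List ℕ)}
    (hc : T.IsCutset c) {σ : List ℕ} (hσ : σ ∈ T.carrier) (hne : σ ≠ [])
    (hdeep : ∀ τ ∈ c, τ.length ≤ σ.length) (havoid : ∀ τ ∈ c, ¬ τ <+: σ) : θ σ = 0 := by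
  refine le_antisymm ?_ (hθ.nonneg hσ hne)
  by_contra! hpos
  obtain ⟨s, hs, hsσ⟩ := hθ.exists_ray_of_pos hσ hne hpos
  obtain ⟨τ, hτ, n, rfl⟩ := hc.2.1 s hs
  refine havoid _ hτ (hsσ ▸ pref_prefix_pref s ?_)
  simpa [length_pref] using hdeep _ hτ

lemma nonneg_of_mem_cutset (hθ : T.IsFlow θ) {c : Finset (List ℕ)} (hc : T.IsCutset c)
    {τ : List ℕ} (hτ : τ ∈ c) : 0 ≤ θ τ :=
  hθ.nonneg (hc.1 τ hτ).1 (hc.1 τ hτ).2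

lemma le_sum_filter_prefix (hθ : T.IsFlow θ) {c : Finset (List ℕ)} (hc : T.IsCutset c)
    {σ : List ℕ} (hσ : σ ∈ T.carrier) (hne : σ ≠ []) (hnp : ∀ τ ∈ c, τ <+: σ → τ = σ) :
    θ σ ≤ ∑ τ ∈ c with σ <+: τ, θ τ := by
  by_cases hσc : σ ∈ c
  · exact Finset.single_le_sum (fun τ hτ => hθ.nonneg_of_mem_cutset hc (Finset.mem_filter.1 hτ).1)
      (Finset.mem_filter.2 ⟨hσc, List.prefix_refl σ⟩)
  by_cases hdeep : ∀ τ ∈ c, τ.length ≤ σ.length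
  · rw [hθ.eq_zero_of_forall_length_le_of_not_prefix hc hσ hne hdeep
      fun τ hτ hτσ => hσc (hnp τ hτ hτσ ▸ hτ)]
    exact Finset.sum_nonneg fun τ hτ => hθ.nonneg_of_mem_cutset hc (Finset.mem_filter.1 hτ).1
  set ch := (T.locallyFinite σ hσ).toFinset
  have hchild : ∀ n ∈ ch, θ (σ ++ [n]) ≤ ∑ τ ∈ c with σ ++ [n] <+: τ, θ τ := fun n hn =>
    hθ.le_sum_filter_prefix hc ((T.locallyFinite σ hσ).mem_toFinset.1 hn) (by simp)
      fun τ hτ hτσn => (List.prefix_concat_iff.1 hτσn).resolve_right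
        fun hτσ => hσc (hnp τ hτ hτσ ▸ hτ)
  calc θ σ = ∑ n ∈ ch, θ (σ ++ [n]) := hθ.eq_sum_children hσ hne
    _ ≤ ∑ n ∈ ch, ∑ τ ∈ c with σ ++ [n] <+: τ, θ τ := Finset.sum_le_sum hchild
    _ ≤ ∑ τ ∈ c with σ <+: τ, θ τ :=
        Finset.sum_sum_filter_append_singleton_prefix_le fun _ h => hθ.nonneg_of_mem_cutset hc h
termination_by c.sup List.length - σ.length
decreasing_by
  push Not at hdeep
  obtain ⟨τ, hτ, hlt⟩ := hdeep
  have := Finset.le_sup (f := List.length) hτ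
  simp only [List.length_append, List.length_singleton]
  omega

lemma le_sum_cutset (hθ : T.IsFlow θ) {c : Finset (List ℕ)} (hc : T.IsCutset c)
    {σ : List ℕ} (hσ : σ ∈ T.carrier) (hne : σ ≠ []) : θ σ ≤ ∑ τ ∈ c, θ τ := by
  by_cases hpre : ∃ τ ∈ c, τ <+: σ
  · obtain ⟨τ, hτ, hτσ⟩ := hpre
    exact (hθ.apply_le_of_prefix hτσ hσ (hc.1 τ hτ).2).trans
      (Finset.single_le_sum (fun _ h => hθ.nonneg_of_mem_cutset hc h) hτ)
  · exact (hθ.le_sum_filter_prefix hc hσ hne fun τ hτ hτσ => (hpre ⟨τ, hτ, hτσ⟩).elim).trans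
      (Finset.sum_le_sum_of_subset_of_nonneg (Finset.filter_subset _ _)
        fun _ h _ => hθ.nonneg_of_mem_cutset hc h)

lemma eq_zero_of_le_of_forall_cutset_sum_lt (hθ : T.IsFlow θ) {C : List ℕ → ℝ}
    (hle : ∀ σ : List ℕ, σ ∈ T.carrier → σ ≠ [] → θ σ ≤ C σ)
    (hC : ∀ ε : ℝ, 0 < ε → ∃ c : Finset (List ℕ), T.IsCutset c ∧ ∑ σ ∈ c, C σ < ε) :
    ∀ σ : List ℕ, σ ∈ T.carrier → σ ≠ [] → θ σ = 0 := by
  intro σ hσ hne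
  refine le_antisymm ?_ (hθ.nonneg hσ hne)
  by_contra! hpos
  obtain ⟨c, hc, hsum⟩ := hC _ hpos
  have hθC : ∑ τ ∈ c, θ τ ≤ ∑ τ ∈ c, C τ :=
    Finset.sum_le_sum fun τ hτ => hle τ (hc.1 τ hτ).1 (hc.1 τ hτ).2
  linarith [hθ.le_sum_cutset hc hσ hne]

end LFTree.IsFlow

lemma Real.self_le_rpow_of_rpow_lt_one {a x : ℝ} (ha : 0 ≤ a) (hx₀ : 0 ≤ x) (hx₁ : x ≤ 1)
    (h : a ^ x < 1) : a ≤ a ^ x :=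
  Real.self_le_rpow_of_le_one ha (not_lt.1 fun h1 => (Real.one_le_rpow h1.le hx₀).not_gt h) hx₁

lemma Finset.sum_lt_of_sum_rpow_lt {ι : Type*} {s : Finset ι} {a : ι → ℝ} {x ε : ℝ}
    (ha : ∀ i ∈ s, 0 ≤ a i) (hx₀ : 0 ≤ x) (hx₁ : x ≤ 1) (hε : ε ≤ 1)
    (h : ∑ i ∈ s, a i ^ x < ε) : ∑ i ∈ s, a i < ε := by
  refine lt_of_le_of_lt (Finset.sum_le_sum fun i hi => ?_) h
  refine Real.self_le_rpow_of_rpow_lt_one (ha i hi) hx₀ hx₁ (lt_of_le_of_lt ?_ (h.trans_le hε))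
  exact Finset.single_le_sum (fun j hj => Real.rpow_nonneg (ha j hj) x) hi

open scoped Topology in
lemma ENNReal.exists_mem_sum_pow_lt_of_sum_iInf_pow_lt {ι α : Type*} {s : Set ι}
    {f : ι → ℝ≥0∞} {c : Finset α} {n : α → ℕ} {δ : ℝ≥0∞} (hfin : ⨅ x ∈ s, f x ≠ ⊤)
    (h : ∑ a ∈ c, (⨅ x ∈ s, f x) ^ n a < δ) : ∃ x ∈ s, ∑ a ∈ c, f x ^ n a < δ := by
  have hopen : {q : ℝ≥0∞ | ∑ a ∈ c, q ^ n a < δ} ∈ 𝓝 (⨅ x ∈ s, f x) :=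
    (isOpen_lt (continuous_finsetSum c fun a _ => ENNReal.continuous_pow (n a))
      continuous_const).mem_nhds h
  obtain ⟨q, hpq, hq⟩ := exists_Ico_subset_of_mem_nhds hopen ⟨⊤, lt_top_iff_ne_top.2 hfin⟩
  obtain ⟨x, hx⟩ := iInf_lt_iff.1 hpq
  obtain ⟨hxs, hfx⟩ := iInf_lt_iff.1 hx
  exact ⟨x, hxs, hq ⟨iInf₂_le x hxs, hfx⟩⟩

lemma pval_le_one {Ω : Type*} [MeasurableSpace Ω] (μ : Measure Ω) [IsProbabilityMeasure μ]
    (A : Ω → ℝ) : pval μ A ≤ 1 :=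
  (iInf₂_le 0 ⟨le_rfl, zero_le_one⟩).trans (by simp)

namespace LFTree

def prefixVertex (T : LFTree) {σ : List ℕ} (hσ : σ ∈ T.carrier) (i : Fin σ.length) :
    T.Vertex :=
  ⟨σ.take (i + 1), T.prefix_closed hσ (List.take_prefix _ _),
    by simp [List.ne_nil_of_length_pos i.pos]⟩

lemma prefixVertex_injective (T : LFTree) {σ : List ℕ} (hσ : σ ∈ T.carrier) :
    Function.Injective (T.prefixVertex hσ) := fun i j hij => by
  have := congrArg (fun v : T.Vertex => v.1.length) hij
  simp only [prefixVertex, List.length_take] at this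
  omega

end LFTree

section Cumul

variable {T : LFTree} {Ω : Type*} {Aσ : List ℕ → Ω → ℝ} {σ : List ℕ}

lemma cumul_eq_prod_prefixVertex (hσ : σ ∈ T.carrier) (ω : Ω) :
    cumul Aσ σ ω = ∏ i : Fin σ.length, Aσ (T.prefixVertex hσ i).1 ω :=
  (Fin.prod_univ_eq_prod_range (fun i => Aσ (σ.take (i + 1)) ω) _).symm

lemma cumul_nonneg (hσ : σ ∈ T.carrier) {ω : Ω} (hω : ∀ v : T.Vertex, 0 ≤ Aσ v.1 ω) :
    0 ≤ cumul Aσ σ ω := by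
  rw [cumul_eq_prod_prefixVertex hσ]
  exact Finset.prod_nonneg fun i _ => hω _

variable [MeasurableSpace Ω] {μ : Measure Ω} {A : Ω → ℝ}

lemma measurable_cumul (hmeas : ∀ v : T.Vertex, Measurable (Aσ v.1)) (hσ : σ ∈ T.carrier) :
    Measurable (cumul Aσ σ) := by
  simp only [funext (cumul_eq_prod_prefixVertex (Aσ := Aσ) hσ)]
  exact Finset.measurable_prod _ fun i _ => hmeas _

lemma lintegral_ofReal_cumul_rpow (hmeas : ∀ v : T.Vertex, Measurable (Aσ v.1))
    (hid : ∀ v : T.Vertex, IdentDistrib (Aσ v.1) A μ μ)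
    (hind : iIndepFun (fun v : T.Vertex => Aσ v.1) μ)
    (hnonneg : ∀ᵐ ω ∂μ, ∀ v : T.Vertex, 0 ≤ Aσ v.1 ω) {x : ℝ} (hσ : σ ∈ T.carrier) :
    ∫⁻ ω, ENNReal.ofReal (cumul Aσ σ ω ^ x) ∂μ
      = (∫⁻ ω, ENNReal.ofReal (A ω ^ x) ∂μ) ^ σ.length := by
  have hg : Measurable fun r : ℝ => ENNReal.ofReal (r ^ x) :=
    (measurable_id.pow_const x).ennreal_ofReal
  let G : T.Vertex → Ω → ℝ≥0∞ := fun v ω => ENNReal.ofReal (Aσ v.1 ω ^ x)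
  let S := Finset.univ.map ⟨_, T.prefixVertex_injective hσ⟩
  have hprod : ∀ᵐ ω ∂μ, ENNReal.ofReal (cumul Aσ σ ω ^ x) = ∏ v ∈ S, G v ω := by
    filter_upwards [hnonneg] with ω hω
    rw [Finset.prod_map, cumul_eq_prod_prefixVertex hσ,
      ← Real.finsetProd_rpow _ _ fun i _ => hω _,
      ENNReal.ofReal_prod_of_nonneg fun i _ => Real.rpow_nonneg (hω _) x]
    rfl
  have hGint : ∀ v, ∫⁻ ω, G v ω ∂μ = ∫⁻ ω, ENNReal.ofReal (A ω ^ x) ∂μ := fun v =>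
    ((hid v).comp hg).lintegral_eq
  rw [lintegral_congr_ae hprod, lintegral_prod_eq_prod_lintegral_of_indepFun S G
      (hind.comp _ fun _ => hg) fun v => hg.comp (hmeas v),
    Finset.prod_congr rfl fun v _ => hGint v]
  simp [S]

lemma meas_ge_sum_ofReal_cumul_rpow_le (hmeas : ∀ v : T.Vertex, Measurable (Aσ v.1))
    (hid : ∀ v : T.Vertex, IdentDistrib (Aσ v.1) A μ μ)
    (hind : iIndepFun (fun v : T.Vertex => Aσ v.1) μ)
    (hnonneg : ∀ᵐ ω ∂μ, ∀ v : T.Vertex, 0 ≤ Aσ v.1 ω) {c : Finset (List ℕ)}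
    (hc : ∀ σ ∈ c, σ ∈ T.carrier) {x : ℝ} {η : ℝ≥0∞} (hη₀ : η ≠ 0) (hη : η ≠ ⊤) :
    μ {ω | η ≤ ∑ σ ∈ c, ENNReal.ofReal (cumul Aσ σ ω ^ x)}
      ≤ (∑ σ ∈ c, (∫⁻ ω, ENNReal.ofReal (A ω ^ x) ∂μ) ^ σ.length) / η := by
  have hmeas_term : ∀ σ ∈ c, Measurable fun ω => ENNReal.ofReal (cumul Aσ σ ω ^ x) :=
    fun σ hσ => ((measurable_cumul hmeas (hc σ hσ)).pow_const x).ennreal_ofReal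
  refine (meas_ge_le_lintegral_div (Finset.measurable_sum _ hmeas_term).aemeasurable hη₀ hη).trans
    (le_of_eq ?_)
  rw [lintegral_finsetSum _ hmeas_term]
  exact congrArg (· / η) (Finset.sum_congr rfl fun σ hσ =>
    lintegral_ofReal_cumul_rpow hmeas hid hind hnonneg (hc σ hσ))

end Cumul

lemma ae_forall_nonneg_of_identDistrib {Ω ι : Type*} [MeasurableSpace Ω] [Countable ι]
    {μ : Measure Ω} {A : Ω → ℝ} {X : ι → Ω → ℝ} (hid : ∀ i, IdentDistrib (X i) A μ μ)
    (hA : ∀ᵐ ω ∂μ, 0 < A ω) : ∀ᵐ ω ∂μ, ∀ i, 0 ≤ X i ω :=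
  ae_all_iff.2 fun i => (hid i).symm.ae_mem_snd measurableSet_Ici (hA.mono fun _ h => h.le)

instance LFTree.instCountableVertex (T : LFTree) : Countable T.Vertex :=
  inferInstanceAs (Countable {σ : List ℕ // σ ∈ T.carrier ∧ σ ≠ []})

lemma ae_exists_cutset_sum_cumul_lt {T : LFTree} {Ω : Type*} [MeasurableSpace Ω]
    {μ : Measure Ω} [IsProbabilityMeasure μ] {A : Ω → ℝ} {Aσ : List ℕ → Ω → ℝ}
    (hmeas : ∀ v : T.Vertex, Measurable (Aσ v.1))
    (hid : ∀ v : T.Vertex, IdentDistrib (Aσ v.1) A μ μ)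
    (hind : iIndepFun (fun v : T.Vertex => Aσ v.1) μ)
    (hnonneg : ∀ᵐ ω ∂μ, ∀ v : T.Vertex, 0 ≤ Aσ v.1 ω)
    (hinf : ∀ ε : ℝ≥0∞, 0 < ε →
      ∃ c : Finset (List ℕ), T.IsCutset c ∧ ∑ σ ∈ c, (pval μ A) ^ σ.length < ε)
    {ε : ℝ} (hε : 0 < ε) :
    ∀ᵐ ω ∂μ, ∃ c : Finset (List ℕ), T.IsCutset c ∧ ∑ σ ∈ c, cumul Aσ σ ω < ε := by
  wlog hε₁ : ε ≤ 1 generalizing ε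
  · filter_upwards [this one_pos le_rfl] with ω ⟨c, hc, hsum⟩
    exact ⟨c, hc, hsum.trans (not_le.1 hε₁)⟩
  have hε' : ENNReal.ofReal ε ≠ 0 := (ENNReal.ofReal_pos.2 hε).ne'
  rw [ae_iff]
  refine le_antisymm (ENNReal.le_of_forall_pos_le_add fun δ hδ _ => ?_) zero_le
  obtain ⟨c, hc, hsum⟩ := hinf (δ * ENNReal.ofReal ε)
    (ENNReal.mul_pos (by exact_mod_cast hδ.ne') hε')
  obtain ⟨x, ⟨hx₀, hx₁⟩, hsum⟩ := ENNReal.exists_mem_sum_pow_lt_of_sum_iInf_pow_lt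
    ((pval_le_one μ A).trans_lt ENNReal.one_lt_top).ne hsum
  let Y : Ω → ℝ≥0∞ := fun ω => ∑ σ ∈ c, ENNReal.ofReal (cumul Aσ σ ω ^ x)
  have hbad : ∀ᵐ ω ∂μ, ω ∈ {ω | ¬ ∃ c : Finset (List ℕ), T.IsCutset c ∧
      ∑ σ ∈ c, cumul Aσ σ ω < ε} → ω ∈ {ω | ENNReal.ofReal ε ≤ Y ω} := by
    filter_upwards [hnonneg] with ω hω hno
    refine not_lt.1 fun hY => hno ⟨c, hc, ?_⟩
    have hC : ∀ σ ∈ c, 0 ≤ cumul Aσ σ ω := fun σ hσ => cumul_nonneg (hc.1 σ hσ).1 hω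
    rw [show Y ω = _ from (ENNReal.ofReal_sum_of_nonneg fun σ hσ =>
      Real.rpow_nonneg (hC σ hσ) x).symm, ENNReal.ofReal_lt_ofReal_iff hε] at hY
    exact Finset.sum_lt_of_sum_rpow_lt hC hx₀ hx₁ hε₁ hY
  calc μ {ω | ¬ ∃ c : Finset (List ℕ), T.IsCutset c ∧ ∑ σ ∈ c, cumul Aσ σ ω < ε}
      ≤ μ {ω | ENNReal.ofReal ε ≤ Y ω} := measure_mono_ae hbad
    _ ≤ (∑ σ ∈ c, (∫⁻ ω, ENNReal.ofReal (A ω ^ x) ∂μ) ^ σ.length) / ENNReal.ofReal ε :=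
        meas_ge_sum_ofReal_cumul_rpow_le hmeas hid hind hnonneg (fun σ hσ => (hc.1 σ hσ).1)
          hε' ENNReal.ofReal_ne_top
    _ ≤ 0 + δ := by
        rw [zero_add, ENNReal.div_le_iff hε' ENNReal.ofReal_ne_top]
        exact hsum.le

theorem no_flow_of_inf_cutset_sum_p_eq_zero_general
    (T : LFTree) {Ω : Type*} [MeasurableSpace Ω] (μ : Measure Ω) [IsProbabilityMeasure μ]
    (A : Ω → ℝ) (hApos : ∀ᵐ ω ∂μ, 0 < A ω)
    (Aσ : List ℕ → Ω → ℝ) (hmeas : ∀ v : T.Vertex, Measurable (Aσ v.1))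
    (hid : ∀ v : T.Vertex, IdentDistrib (Aσ v.1) A μ μ)
    (hind : iIndepFun (fun v : T.Vertex => Aσ v.1) μ)
    (hinf : ∀ ε : ℝ≥0∞, 0 < ε →
      ∃ c : Finset (List ℕ), T.IsCutset c ∧ ∑ σ ∈ c, (pval μ A) ^ σ.length < ε) :
    ∀ᵐ ω ∂μ,
      (∀ ε : ℝ, 0 < ε →
        ∃ c : Finset (List ℕ), T.IsCutset c ∧ ∑ σ ∈ c, cumul Aσ σ ω < ε) ∧
      (∀ θ : List ℕ → ℝ, T.IsFlow θ →
        (∀ σ : List ℕ, σ ∈ T.carrier → σ ≠ [] → θ σ ≤ cumul Aσ σ ω) →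
        ∀ σ : List ℕ, σ ∈ T.carrier → σ ≠ [] → θ σ = 0) := by
  have hnonneg := ae_forall_nonneg_of_identDistrib hid hApos
  have hcut : ∀ᵐ ω ∂μ, ∀ k : ℕ, ∃ c : Finset (List ℕ), T.IsCutset c ∧
      ∑ σ ∈ c, cumul Aσ σ ω < 1 / (k + 1) :=
    ae_all_iff.2 fun k => ae_exists_cutset_sum_cumul_lt hmeas hid hind hnonneg hinf
      Nat.one_div_pos_of_nat
  filter_upwards [hcut] with ω hω
  have hC : ∀ ε : ℝ, 0 < ε →
      ∃ c : Finset (List ℕ), T.IsCutset c ∧ ∑ σ ∈ c, cumul Aσ σ ω < ε := fun ε hε => by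
    obtain ⟨k, hk⟩ := exists_nat_one_div_lt hε
    obtain ⟨c, hc, hsum⟩ := hω k
    exact ⟨c, hc, hsum.trans hk⟩
  exact ⟨hC, fun θ hθ hle => hθ.eq_zero_of_le_of_forall_cutset_sum_lt hle hC⟩

/-- Part (2) of Theorem 1 (Lyons–Pemantle): if the infimum over cutsets `Π` of
`Σ_{σ ∈ Π} p^{|σ|}` is `0` (in particular if `p · br T < 1`), then almost surely the
infimum over cutsets of `Σ_{σ ∈ Π} C_σ` is `0`, and consequently almost surely the
only flow `θ` on `T` with `θ(σ) ≤ C_σ` for all non-root `σ` is the zero flow. -/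
theorem no_flow_of_inf_cutset_sum_p_eq_zero
    (T : LFTree) {Ω : Type*} [MeasurableSpace Ω] (μ : Measure Ω) [IsProbabilityMeasure μ]
    (A : Ω → ℝ) (hA : Measurable A) (hApos : ∀ᵐ ω ∂μ, 0 < A ω)
    (Aσ : List ℕ → Ω → ℝ) (hmeas : ∀ v : T.Vertex, Measurable (Aσ v.1))
    (hid : ∀ v : T.Vertex, IdentDistrib (Aσ v.1) A μ μ)
    (hind : iIndepFun (fun v : T.Vertex => Aσ v.1) μ)
    (hinf : ∀ ε : ℝ≥0∞, 0 < ε →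
      ∃ c : Finset (List ℕ), T.IsCutset c ∧ ∑ σ ∈ c, (pval μ A) ^ σ.length < ε) :
    ∀ᵐ ω ∂μ,
      (∀ ε : ℝ, 0 < ε →
        ∃ c : Finset (List ℕ), T.IsCutset c ∧ ∑ σ ∈ c, cumul Aσ σ ω < ε) ∧
      (∀ θ : List ℕ → ℝ, T.IsFlow θ →
        (∀ σ : List ℕ, σ ∈ T.carrier → σ ≠ [] → θ σ ≤ cumul Aσ σ ω) →
        ∀ σ : List ℕ, σ ∈ T.carrier → σ ≠ [] → θ σ = 0) :=
  no_flow_of_inf_cutset_sum_p_eq_zero_general T μ A hApos Aσ hmeas hid hind hinf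
end
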